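/- arXiv:2509.03688 — 6 statements merged into one kernel-verified Lean document; each statement's English description precedes it below -/
import Mathlib

section
/- Let k ∈ ℕ and let f : [ℕ]² → 2 be a coloring which is transitive for color 0 (i.e., for all x < y < z, if f(x,y) = f(y,z) = 0 then f(x,z) = 0), and suppose there is no f-homogeneous set of size k for color 1. Then there exists a coloring g : ℕ → C with C = k(k+1)/2 colors such that for every i < C, the set g⁻¹(i) is f-homogeneous for color 0. -/
/-!
The pairs `x < y` with `f x y = 0` form a strict order `r` on `ℕ` refining `<`, and its antichains
are the `1`-homogeneous sets, so they have fewer than `k` elements. By Dilworth's theorem, in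
Galvin's form (remove the largest element `m`, then peel off a chain through `m` that meets every
maximum antichain of the rest), every finite set splits into `k - 1` chains of `r`. Colourings of
the finite sets converge along an ultrafilter on `Finset ℕ` finer than `atTop` to a colouring of
all of `ℕ`, and `k - 1 ≤ k (k + 1) / 2`.
-/

/-- `H` is `f`-homogeneous for color `c`. -/
def Homog (f : ℕ → ℕ → Fin 2) (c : Fin 2) (H : Set ℕ) : Prop :=
  ∀ x ∈ H, ∀ y ∈ H, x < y → f x y = c

open Finset Filter

variable {α : Type*} {r : α → α → Prop} {n : ℕ} {g : α → ℕ}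

-- Colours are natural numbers bounded on `s` rather than `Fin n`: then `∅` has a colouring with
-- `n = 0` colours.
def IsChainColoring (r : α → α → Prop) (n : ℕ) (s : Set α) (g : α → ℕ) : Prop :=
  (∀ x ∈ s, g x < n) ∧ ∀ x ∈ s, ∀ y ∈ s, x ≠ y → g x = g y → r x y ∨ r y x

theorem exists_isChainColoring_univ
    (h : ∀ s : Finset α, ∃ g, IsChainColoring r n (s : Set α) g) :
    ∃ g, IsChainColoring r n Set.univ g := by
  classical
  choose G hG using h
  let U : Ultrafilter (Finset α) := .of atTop
  have hmem (x : α) : ∀ᶠ s : Finset α in U, x ∈ s :=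
    Ultrafilter.of_le atTop <| (eventually_ge_atTop {x}).mono fun _ => singleton_subset_iff.1
  have hlim (x : α) : ∃ i ∈ Set.Iio n, ∀ᶠ s : Finset α in U, G s x = i :=
    (Ultrafilter.eventually_exists_mem_iff (Set.finite_Iio n)).1 <|
      (hmem x).mono fun s hs => ⟨G s x, (hG s).1 x hs, rfl⟩
  choose g hg_lt hg using hlim
  refine ⟨g, fun x _ => hg_lt x, fun x _ y _ hxy hgxy => ?_⟩
  obtain ⟨s, hxs, hys, hx, hy⟩ := ((hmem x).and ((hmem y).and ((hg x).and (hg y)))).exists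
  exact (hG s).2 x hxs y hys hxy (by rw [hx, hy, hgxy])

theorem IsChainColoring.injOn {s t : Set α} (hg : IsChainColoring r n s g) (hts : t ⊆ s)
    (ht : IsAntichain r t) : t.InjOn g :=
  fun x hx y hy hgxy => by_contra fun hxy =>
    (hg.2 x (hts hx) y (hts hy) hxy hgxy).elim (ht hx hy hxy) (ht hy hx (Ne.symm hxy))

theorem IsChainColoring.exists_mem_eq_of_card_eq {s : Set α} {t : Finset α}
    (hg : IsChainColoring r n s g) (hts : ↑t ⊆ s)
    (ht : IsAntichain r (t : Set α)) (hcard : #t = n) {i : ℕ} (hi : i < n) :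
    ∃ z ∈ t, g z = i := by
  have himage : t.image g = range n :=
    eq_of_subset_of_card_le (image_subset_iff.2 fun x hx => mem_range.2 (hg.1 x (hts hx)))
      (by rw [card_range, card_image_of_injOn (hg.injOn hts ht), hcard])
  exact mem_image.1 (himage ▸ mem_range.2 hi)

theorem IsChainColoring.ite_mem [DecidableEq α] {s K : Finset α}
    (hg : IsChainColoring r n ↑(s \ K) g) (hK : IsChain r (K : Set α)) :
    IsChainColoring r (n + 1) s (fun x => if x ∈ K then n else g x) := by
  have hg_lt {x} (hx : x ∈ s) (hxK : x ∉ K) : g x < n := hg.1 x (by simp [hx, hxK])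
  refine ⟨fun x hx => ?_, fun x hx y hy hxy hgxy => ?_⟩
  · dsimp only
    split_ifs with hxK
    · exact n.lt_succ_self
    · exact (hg_lt hx hxK).trans n.lt_succ_self
  by_cases hxK : x ∈ K <;> by_cases hyK : y ∈ K <;> simp only [hxK, hyK, if_true, if_false] at hgxy
  · exact hK hxK hyK hxy
  · exact absurd hgxy.symm (hg_lt hy hyK).ne
  · exact absurd hgxy (hg_lt hx hxK).ne
  · exact hg.2 x (by simp [mem_coe.1 hx, hxK]) y (by simp [mem_coe.1 hy, hyK]) hxy hgxy

section LinearOrder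

variable [LinearOrder α]

theorem isChain_of_lt {s : Set α} (h : ∀ x ∈ s, ∀ y ∈ s, x < y → r x y) : IsChain r s :=
  fun x hx y hy hxy => hxy.lt_or_gt.imp (h x hx y hy) (h y hy x hx)

theorem isAntichain_of_lt (hr : ∀ ⦃x y⦄, r x y → x < y) {s : Set α}
    (h : ∀ x ∈ s, ∀ y ∈ s, x < y → ¬ r x y) : IsAntichain r s :=
  fun x hx y hy _ hxy => h x hx y hy (hr hxy) hxy

theorem IsChainColoring.rel_of_lt (hr : ∀ ⦃x y⦄, r x y → x < y) {s : Set α}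
    (hg : IsChainColoring r n s g) {x y : α} (hx : x ∈ s) (hy : y ∈ s) (hxy : x < y)
    (hc : g x = g y) : r x y :=
  (hg.2 x hx y hy hxy.ne hc).resolve_right fun hyx => lt_asymm hxy (hr hyx)

theorem IsChainColoring.rel_of_le_of_rel (hr : ∀ ⦃x y⦄, r x y → x < y) [IsTrans α r]
    {s : Set α} (hg : IsChainColoring r n s g) {x y z : α} (hx : x ∈ s) (hy : y ∈ s)
    (hxy : x ≤ y) (hc : g x = g y) (hyz : r y z) : r x z :=
  hxy.eq_or_lt.elim (fun h => h ▸ hyz) fun h => trans_of r (hg.rel_of_lt hr hx hy h hc) hyz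

theorem IsChainColoring.exists_tops (hr : ∀ ⦃x y⦄, r x y → x < y) [IsTrans α r]
    {s : Finset α} (hg : IsChainColoring r n ↑s g)
    (hfull : ∃ t ⊆ s, IsAntichain r (t : Set α) ∧ #t = n) :
    ∃ a : Fin n → α, (∀ i, a i ∈ s) ∧ (∀ i, g (a i) = i) ∧ IsAntichain r (Set.range a) ∧
      ∀ (i : Fin n), ∀ t ⊆ s, IsAntichain r (t : Set α) → #t = n → ∀ z ∈ t, g z = i → z ≤ a i := by
  classical
  let D (i : Fin n) : Finset α :=
    s.filter fun z => g z = i ∧ ∃ t ⊆ s, IsAntichain r (t : Set α) ∧ #t = n ∧ z ∈ t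
  have hD (i : Fin n) : (D i).Nonempty := by
    obtain ⟨t, hts, ht, hcard⟩ := hfull
    obtain ⟨z, hz, hgz⟩ := hg.exists_mem_eq_of_card_eq (coe_subset.2 hts) ht hcard i.isLt
    exact ⟨z, mem_filter.2 ⟨hts hz, hgz, t, hts, ht, hcard, hz⟩⟩
  set a : Fin n → α := fun i => (D i).max' (hD i)
  have haD (i : Fin n) : a i ∈ D i := max'_mem _ _
  have ha_top (i : Fin n) {t : Finset α} (hts : t ⊆ s) (ht : IsAntichain r (t : Set α))
      (hcard : #t = n) {z : α} (hz : z ∈ t) (hgz : g z = i) : z ≤ a i :=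
    le_max' _ _ (mem_filter.2 ⟨hts hz, hgz, t, hts, ht, hcard, hz⟩)
  refine ⟨a, fun i => (mem_filter.1 (haD i)).1, fun i => (mem_filter.1 (haD i)).2.1, ?_,
    fun i t hts ht hcard z hz hgz => ha_top i hts ht hcard hz hgz⟩
  refine isAntichain_of_lt hr ?_
  rintro _ ⟨i, rfl⟩ _ ⟨j, rfl⟩ hij hrij
  -- a maximum antichain through `a j` has an element `z ≤ a i` of colour `i`, and then `r z (a j)`
  obtain ⟨-, -, t, hts, ht, hcard, haj⟩ := mem_filter.1 (haD j)
  obtain ⟨z, hz, hgz⟩ := hg.exists_mem_eq_of_card_eq (coe_subset.2 hts) ht hcard i.isLt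
  have hzi := ha_top i hts ht hcard hz hgz
  have hai := mem_filter.1 (haD i)
  have hrz : r z (a j) := hg.rel_of_le_of_rel hr (hts hz) hai.1 hzi
    (hgz.trans hai.2.1.symm) hrij
  exact ht hz haj (hr hrz).ne hrz

theorem IsChainColoring.exists_chain_meets_antichains (hr : ∀ ⦃x y⦄, r x y → x < y) [IsTrans α r]
    {s : Finset α} (hg : IsChainColoring r n ↑s g) {m : α} (hm : ∀ x ∈ s, x < m)
    (hw : ∀ t ⊆ insert m s, IsAntichain r (t : Set α) → #t ≤ n) :
    ∃ K ⊆ insert m s, m ∈ K ∧ IsChain r (K : Set α) ∧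
      ∀ t ⊆ s, IsAntichain r (t : Set α) → #t = n → ∃ z ∈ t, z ∈ K := by
  classical
  by_cases hfull : ∃ t ⊆ s, IsAntichain r (t : Set α) ∧ #t = n
  swap
  · exact ⟨{m}, by simp, mem_singleton_self m, by simp,
      fun t hts ht hcard => (hfull ⟨t, hts, ht, hcard⟩).elim⟩
  obtain ⟨a, ha_mem, ha_color, ha_anti, ha_top⟩ := hg.exists_tops hr hfull
  have ha_inj : Function.Injective a := fun i j h => Fin.ext <| by
    rw [← ha_color i, ← ha_color j, h]
  -- otherwise the tops together with `m` would form an antichain of size `n + 1`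
  obtain ⟨i, hi⟩ : ∃ i, r (a i) m := by
    by_contra! hnot
    have hanti : IsAntichain r ((insert m (univ.image a) : Finset α) : Set α) := by
      rw [coe_insert, coe_image, coe_univ, Set.image_univ]
      exact ha_anti.insert (fun _ ⟨j, hj⟩ _ => hj ▸ hnot j)
        (fun _ ⟨j, hj⟩ _ hmj => lt_asymm (hr hmj) (hj ▸ hm _ (ha_mem j)))
    have hm_not : m ∉ univ.image a := fun h => by
      obtain ⟨j, -, hj⟩ := mem_image.1 h
      exact lt_irrefl m (hj ▸ hm _ (ha_mem j))
    have hcard := hw _ (insert_subset_insert m (image_subset_iff.2 fun j _ => ha_mem j)) hanti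
    rw [card_insert_of_notMem hm_not, card_image_of_injective _ ha_inj, card_univ,
      Fintype.card_fin] at hcard
    omega
  refine ⟨insert m (s.filter fun x => g x = i ∧ x ≤ a i),
    insert_subset_insert m (filter_subset _ s), mem_insert_self m _, isChain_of_lt ?_,
    fun t hts ht hcard => ?_⟩
  · simp only [coe_insert, coe_filter, Set.mem_insert_iff, Set.mem_ofPred_eq]
    rintro x (rfl | ⟨hx, hgx, hxa⟩) y (rfl | ⟨hy, hgy, -⟩) hxy
    · exact absurd hxy (lt_irrefl _)
    · exact absurd hxy (hm y hy).not_gt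
    · exact hg.rel_of_le_of_rel hr hx (ha_mem i) hxa (hgx.trans (ha_color i).symm) hi
    · exact hg.rel_of_lt hr hx hy hxy (hgx.trans hgy.symm)
  · obtain ⟨z, hz, hgz⟩ := hg.exists_mem_eq_of_card_eq (coe_subset.2 hts) ht hcard i.isLt
    exact ⟨z, hz, mem_insert_of_mem (mem_filter.2 ⟨hts hz, hgz, ha_top i t hts ht hcard z hz hgz⟩)⟩

theorem exists_isChainColoring_of_card_antichain_le (hr : ∀ ⦃x y⦄, r x y → x < y) [IsTrans α r]
    (s : Finset α) (n : ℕ) (hw : ∀ t ⊆ s, IsAntichain r (t : Set α) → #t ≤ n) :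
    ∃ g, IsChainColoring r n ↑s g := by
  classical
  induction s using Finset.strongInduction generalizing n with
  | H s ih =>
  rcases s.eq_empty_or_nonempty with rfl | hs
  · exact ⟨0, by simp [IsChainColoring]⟩
  set m := s.max' hs
  have hm : m ∈ s := max'_mem s hs
  have hsm : insert m (s.erase m) = s := insert_erase hm
  obtain ⟨g, hg⟩ := ih (s.erase m) (erase_ssubset hm) n fun t hts =>
    hw t (hts.trans (erase_subset m s))
  obtain ⟨K, hKs, hmK, hK, hK_meets⟩ := hg.exists_chain_meets_antichains hr
    (fun x hx => lt_of_le_of_ne (le_max' s x (mem_of_mem_erase hx)) (ne_of_mem_erase hx))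
    (by rwa [hsm])
  obtain ⟨n, rfl⟩ : ∃ n', n = n' + 1 :=
    Nat.exists_eq_add_one.2 (hw {m} (singleton_subset_iff.2 hm) (by simp))
  have hsK : s \ K ⊆ s.erase m := fun x hx =>
    mem_erase.2 ⟨fun h => (mem_sdiff.1 hx).2 (h ▸ hmK), (mem_sdiff.1 hx).1⟩
  have hw' : ∀ t ⊆ s \ K, IsAntichain r (t : Set α) → #t ≤ n := by
    intro t hts ht
    by_contra! hlt
    obtain ⟨z, hz, hzK⟩ := hK_meets t (hts.trans hsK) ht
      (le_antisymm (hw t (hts.trans sdiff_subset) ht) hlt)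
    exact (mem_sdiff.1 (hts hz)).2 hzK
  obtain ⟨g₂, hg₂⟩ := ih (s \ K) (sdiff_ssubset (hsm ▸ hKs) ⟨m, hmK⟩) n hw'
  exact ⟨_, hg₂.ite_mem hK⟩

end LinearOrder

theorem stmt_2 (k : ℕ) (f : ℕ → ℕ → Fin 2)
    (htrans : ∀ x y z : ℕ, x < y → y < z → f x y = 0 → f y z = 0 → f x z = 0)
    (hk : ¬ ∃ S : Finset ℕ, S.card = k ∧ Homog f 1 ↑S) :
    ∃ g : ℕ → ℕ, (∀ x, g x < k * (k + 1) / 2) ∧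
      ∀ i < k * (k + 1) / 2, Homog f 0 {x | g x = i} := by
  let r (x y : ℕ) : Prop := x < y ∧ f x y = 0
  have hr : ∀ ⦃x y⦄, r x y → x < y := fun _ _ h => h.1
  have : IsTrans ℕ r := ⟨fun x y z hxy hyz =>
    ⟨hxy.1.trans hyz.1, htrans x y z hxy.1 hyz.1 hxy.2 hyz.2⟩⟩
  have hwidth (t : Finset ℕ) (ht : IsAntichain r (t : Set ℕ)) : #t ≤ k - 1 := by
    by_contra! hlt
    obtain ⟨S, hSt, hS⟩ := exists_subset_card_eq (show k ≤ #t by omega)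
    exact hk ⟨S, hS, fun x hx y hy hxy =>
      Fin.eq_one_of_ne_zero _ fun h0 => ht (hSt hx) (hSt hy) hxy.ne ⟨hxy, h0⟩⟩
  obtain ⟨g, hg⟩ := exists_isChainColoring_univ fun s =>
    exists_isChainColoring_of_card_antichain_le hr s (k - 1) fun t _ => hwidth t
  have hk_le : k - 1 ≤ k * (k + 1) / 2 :=
    (Nat.sub_le k 1).trans ((Nat.le_div_iff_mul_le two_pos).2 (by nlinarith [Nat.le_mul_self k]))
  exact ⟨g, fun x => (hg.1 x trivial).trans_le hk_le, fun i _ x hx y hy hxy =>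
    (hg.rel_of_lt hr trivial trivial hxy (hx.trans hy.symm)).2⟩
end

section
/- Let P = (ℕ, <_P) be a partial order of height at most h, meaning every <_P-chain has size at most h. Define g₀(x) to be the length minus one of the longest sequence x₀ < x₁ < ... < x_s = x that is simultaneously strictly increasing in ℕ and strictly increasing in <_P, and g₁(x) analogously with <_P-decreasing in place of <_P-increasing. Then for every pair (i,j) with i,j < h, the set {x : g₀(x) = i and g₁(x) = j} is a <_P-antichain. Consequently ℕ can be partitioned into at most h² antichains. -/
/-!
Label every `x` by the pair `(g₀ x, g₁ x)`. If `r x y`, then either `x < y`, and a longest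
`<`-increasing `r`-chain ending at `x` extends by `y`, so `g₀ x < g₀ y`; or `y < x`, and a longest
`<`-increasing `r`-decreasing chain ending at `y` extends by `x`, so `g₁ y < g₁ x`. Hence each label
class is an antichain. Both labels are `< h` because the chains witnessing them are `r`-chains
(by transitivity) of distinct elements, so the labels fit into `h * h` values.
-/

theorem List.IsChain.concat_of_getLast? {α : Type*} {R : α → α → Prop} {l : List α} {x y : α}
    (hl : l.IsChain R) (hx : l.getLast? = some x) (hxy : R x y) : (l ++ [y]).IsChain R :=
  List.isChain_append.mpr ⟨hl, List.isChain_singleton y, by simp [hx, hxy]⟩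

section ChainHeights

variable {α : Type*} [LinearOrder α] (r : α → α → Prop)

def chainHeights (x : α) : Set ℕ :=
  {s | ∃ l : List α, l.length = s + 1 ∧ l.IsChain (· < ·) ∧ l.IsChain r ∧ l.getLast? = some x}

variable {r}

theorem succ_mem_chainHeights {s : ℕ} {x y : α} (hs : s ∈ chainHeights r x) (hlt : x < y)
    (hr : r x y) : s + 1 ∈ chainHeights r y := by
  obtain ⟨l, hlen, hlt_chain, hr_chain, hlast⟩ := hs
  exact ⟨l ++ [y], by simp [hlen], hlt_chain.concat_of_getLast? hlast hlt,
    hr_chain.concat_of_getLast? hlast hr, List.getLast?_concat⟩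

theorem lt_of_isGreatest_chainHeights {a b : ℕ} {x y : α} (ha : IsGreatest (chainHeights r x) a)
    (hb : IsGreatest (chainHeights r y) b) (hlt : x < y) (hr : r x y) : a < b :=
  hb.2 (succ_mem_chainHeights ha.1 hlt hr)

theorem not_rel_of_chainHeights_eq (hirr : ∀ x, ¬ r x x) {a b : ℕ} {x y : α}
    (hx₀ : IsGreatest (chainHeights r x) a) (hy₀ : IsGreatest (chainHeights r y) a)
    (hx₁ : IsGreatest (chainHeights (flip r) x) b) (hy₁ : IsGreatest (chainHeights (flip r) y) b) :
    ¬ r x y := by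
  intro hr
  rcases lt_trichotomy x y with hlt | rfl | hgt
  · exact (lt_of_isGreatest_chainHeights hx₀ hy₀ hlt hr).false
  · exact hirr x hr
  · exact (lt_of_isGreatest_chainHeights hy₁ hx₁ hgt hr).false

theorem lt_of_mem_chainHeights (htrans : ∀ x y z, r x y → r y z → r x z) {h : ℕ}
    (hheight : ∀ S : Finset α, IsChain r (S : Set α) → S.card ≤ h) {s : ℕ} {x : α}
    (hs : s ∈ chainHeights r x) : s < h := by
  classical
  obtain ⟨l, hlen, hlt_chain, hr_chain, -⟩ := hs
  have : Trans r r r := ⟨htrans _ _ _⟩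
  have : Std.Symm fun a b => r a b ∨ r b a := ⟨fun _ _ => Or.symm⟩
  have hnodup : l.Nodup := hlt_chain.pairwise.imp ne_of_lt
  have hchain : IsChain r (l.toFinset : Set α) := by
    rw [List.coe_toFinset]
    exact (hr_chain.pairwise.imp Or.inl).set_pairwise
  have hcard := hheight l.toFinset hchain
  rw [List.toFinset_card_of_nodup hnodup, hlen] at hcard
  omega

end ChainHeights

theorem stmt_3 (r : ℕ → ℕ → Prop)
    (hirr : ∀ x, ¬ r x x) (htrans : ∀ x y z, r x y → r y z → r x z)
    (h : ℕ)
    (hheight : ∀ S : Finset ℕ, (∀ x ∈ S, ∀ y ∈ S, x ≠ y → r x y ∨ r y x) → S.card ≤ h)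
    (g₀ g₁ : ℕ → ℕ)
    (hg₀ : ∀ x, IsGreatest {s | ∃ l : List ℕ, l.length = s + 1 ∧
      l.Chain' (· < ·) ∧ l.Chain' r ∧ l.getLast? = some x} (g₀ x))
    (hg₁ : ∀ x, IsGreatest {s | ∃ l : List ℕ, l.length = s + 1 ∧
      l.Chain' (· < ·) ∧ l.Chain' (fun a b => r b a) ∧ l.getLast? = some x} (g₁ x)) :
    (∀ i < h, ∀ j < h, ∀ x y : ℕ, g₀ x = i → g₁ x = j → g₀ y = i → g₁ y = j → ¬ r x y) ∧
    ∃ g : ℕ → ℕ, (∀ x, g x < h * h) ∧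
      ∀ c : ℕ, ∀ x y : ℕ, g x = c → g y = c → ¬ r x y := by
  have hg₀ : ∀ x, IsGreatest (chainHeights r x) (g₀ x) := hg₀
  have hg₁ : ∀ x, IsGreatest (chainHeights (flip r) x) (g₁ x) := hg₁
  have antichain : ∀ x y, g₀ x = g₀ y → g₁ x = g₁ y → ¬ r x y := fun x y h₀ h₁ =>
    not_rel_of_chainHeights_eq hirr (h₀ ▸ hg₀ x) (hg₀ y) (h₁ ▸ hg₁ x) (hg₁ y)
  have hg₀_lt : ∀ x, g₀ x < h := fun x => lt_of_mem_chainHeights htrans hheight (hg₀ x).1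
  have hg₁_lt : ∀ x, g₁ x < h := fun x =>
    lt_of_mem_chainHeights (fun a b c hab hbc => htrans c b a hbc hab)
      (fun S hS => hheight S hS.symm) (hg₁ x).1
  refine ⟨fun i _ j _ x y hx₀ hx₁ hy₀ hy₁ => antichain x y (hx₀.trans hy₀.symm)
    (hx₁.trans hy₁.symm), fun x => finProdFinEquiv (⟨g₀ x, hg₀_lt x⟩, ⟨g₁ x, hg₁_lt x⟩),
    fun x => Fin.isLt _, fun c x y hx hy => ?_⟩
  have hlabel := finProdFinEquiv.injective (Fin.val_injective (hx.trans hy.symm))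
  simp only [Prod.mk.injEq, Fin.mk.injEq] at hlabel
  exact antichain x y hlabel.1 hlabel.2
end

section
/- Suppose f : [ℕ]² → 2 is a coloring such that there is no f-homogeneous set of size k for color 1, and suppose X = {x₀ < x₁ < ...} is an infinite set such that the induced coloring h(a,b) = f(x_a, x_b) is transitive for both colors (for each c < 2: h(a,b) = h(b,c') = c implies h(a,c') = c for a < b < c'). Then there exists an infinite f-homogeneous set for color 0. -/
def IsIncreasingChain (r : ℕ → ℕ → Prop) (S : Set ℕ) : Prop :=
  ∀ a ∈ S, ∀ b ∈ S, a < b → r a b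

lemma IsIncreasingChain.mono {r : ℕ → ℕ → Prop} {S T : Set ℕ} (hS : IsIncreasingChain r S)
    (hTS : T ⊆ S) : IsIncreasingChain r T :=
  fun a ha b hb hab => hS a (hTS ha) b (hTS hb) hab

lemma IsIncreasingChain.image {r : ℕ → ℕ → Prop} {x : ℕ → ℕ} {S : Set ℕ}
    (hS : IsIncreasingChain (fun a b => r (x a) (x b)) S) (hx : StrictMono x) :
    IsIncreasingChain r (x '' S) := by
  rintro _ ⟨a, ha, rfl⟩ _ ⟨b, hb, rfl⟩ hab
  exact hS a ha b hb (hx.lt_iff_lt.mp hab)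

open Classical in
noncomputable def chainHeight (r : ℕ → ℕ → Prop) (n : ℕ) : ℕ :=
  ((Finset.range n).filter (r · n)).attach.sup fun m => chainHeight r m.1 + 1
termination_by n
decreasing_by exact Finset.mem_range.mp (Finset.mem_filter.mp m.2).1

section

variable {r : ℕ → ℕ → Prop}

lemma chainHeight_lt_chainHeight {a b : ℕ} (hab : a < b) (h : r a b) :
    chainHeight r a < chainHeight r b := by
  classical
  have ha : a ∈ (Finset.range b).filter (r · b) :=
    Finset.mem_filter.mpr ⟨Finset.mem_range.mpr hab, h⟩
  conv_rhs => rw [chainHeight]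
  exact Finset.le_sup (f := fun m => chainHeight r m.1 + 1) (Finset.mem_attach _ ⟨a, ha⟩)

lemma chainHeight_eq_zero_or_exists (n : ℕ) :
    chainHeight r n = 0 ∨ ∃ m < n, r m n ∧ chainHeight r n = chainHeight r m + 1 := by
  classical
  set F := (Finset.range n).filter (r · n)
  rcases F.eq_empty_or_nonempty with hF | hF
  · left
    rw [chainHeight, ← Nat.le_zero]
    exact Finset.sup_le fun m _ => absurd m.2 (show m.1 ∉ F from hF ▸ Finset.notMem_empty _)
  · right
    obtain ⟨⟨m, hmF⟩, -, hsup⟩ := Finset.exists_mem_eq_sup F.attach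
      (Finset.attach_nonempty_iff.mpr hF) fun m => chainHeight r m.1 + 1
    obtain ⟨hmn, hm⟩ := Finset.mem_filter.mp hmF
    exact ⟨m, Finset.mem_range.mp hmn, hm, by rw [chainHeight]; exact hsup⟩

variable (htr : ∀ a b d, a < b → b < d → r a b → r b d → r a d)
include htr

lemma exists_isIncreasingChain_card_eq_chainHeight_add_one (n : ℕ) :
    ∃ S : Finset ℕ,
      S.card = chainHeight r n + 1 ∧ IsGreatest (↑S) n ∧ IsIncreasingChain r ↑S := by
  induction n using Nat.strong_induction_on with
  | _ n ih =>
  rcases chainHeight_eq_zero_or_exists (r := r) n with h0 | ⟨m, hmn, hm, hchainHeight⟩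
  · refine ⟨{n}, by simp [h0], by simp, ?_⟩
    simp [IsIncreasingChain]
  obtain ⟨S, hcard, ⟨hmS, hS_le⟩, hS⟩ := ih m hmn
  have hlt : ∀ a ∈ S, a < n := fun a ha => (hS_le ha).trans_lt hmn
  have hrel : ∀ a ∈ S, r a n := fun a ha =>
    (hS_le ha).eq_or_lt.elim (fun h => h ▸ hm) fun h => htr a m n h hmn (hS a ha m hmS h) hm
  refine ⟨insert n S, ?_, ?_, ?_⟩
  · rw [Finset.card_insert_of_notMem fun h => (hlt n h).false, hcard, hchainHeight]
  · refine ⟨by simp, fun a ha => ?_⟩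
    rcases Finset.mem_insert.mp ha with rfl | ha
    exacts [le_rfl, (hlt a ha).le]
  · simp only [Finset.coe_insert]
    rintro a (rfl | ha) b (rfl | hb) hab
    · exact absurd hab (lt_irrefl _)
    · exact absurd hab (hlt b hb).not_gt
    · exact hrel a ha
    · exact hS a ha b hb hab

lemma chainHeight_lt_of_forall_card_eq {k : ℕ}
    (hk : ∀ S : Finset ℕ, S.card = k → ¬ IsIncreasingChain r ↑S) (n : ℕ) :
    chainHeight r n < k := by
  by_contra! hkn
  obtain ⟨S, hcard, -, hS⟩ := exists_isIncreasingChain_card_eq_chainHeight_add_one htr n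
  obtain ⟨T, hTS, hTcard⟩ := Finset.exists_subset_card_eq (show k ≤ S.card by omega)
  exact hk T hTcard (hS.mono hTS)

theorem exists_infinite_isIncreasingChain_not {k : ℕ}
    (hk : ∀ S : Finset ℕ, S.card = k → ¬ IsIncreasingChain r ↑S) :
    ∃ A : Set ℕ, A.Infinite ∧ IsIncreasingChain (fun a b => ¬ r a b) A := by
  obtain ⟨j, hj⟩ := Finite.exists_infinite_fiber fun n =>
    (⟨chainHeight r n, chainHeight_lt_of_forall_card_eq htr hk n⟩ : Fin k)
  refine ⟨_, Set.infinite_coe_iff.mp hj, fun a ha b hb hab hr => ?_⟩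
  have hab_height : chainHeight r a = chainHeight r b := Fin.mk.inj (ha.trans hb.symm)
  exact (chainHeight_lt_chainHeight hab hr).ne hab_height

end

theorem stmt_7 (f : ℕ → ℕ → Fin 2) (k : ℕ)
    (hk : ¬ ∃ S : Finset ℕ, S.card = k ∧ Homog f 1 ↑S)
    (x : ℕ → ℕ) (hx : StrictMono x)
    (htrans : ∀ c : Fin 2, ∀ a b d : ℕ, a < b → b < d →
      f (x a) (x b) = c → f (x b) (x d) = c → f (x a) (x d) = c) :
    ∃ H : Set ℕ, H.Infinite ∧ Homog f 0 H := by
  have hchain : ∀ S : Finset ℕ, S.card = k →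
      ¬ IsIncreasingChain (fun a b => f (x a) (x b) = 1) ↑S := by
    intro S hS hchain
    refine hk ⟨S.image x, by rw [Finset.card_image_of_injective _ hx.injective, hS], ?_⟩
    rw [Finset.coe_image]
    exact hchain.image hx
  obtain ⟨A, hA, hantichain⟩ := exists_infinite_isIncreasingChain_not (htrans 1) hchain
  refine ⟨x '' A, hA.image hx.injective.injOn, IsIncreasingChain.image ?_ hx⟩
  intro a ha b hb hab
  have := hantichain a ha b hb hab
  omega
end

section
/- Let L = (ℕ, <_L) be a linear order. Call x ∈ ℕ small if {y : y <_L x} is finite, and large if {y : x <_L y} is finite. Suppose every element of ℕ is small or large (L is stable). If the set of small elements is infinite, then there exists an infinite <_L-ascending sequence; if the set of large elements is infinite, then there exists an infinite <_L-descending sequence. In particular, every stable linear order on ℕ admits an infinite ascending or descending sequence. -/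
/-! Stability says that the small and the large elements cover ℕ, so one of the two sets is
infinite. If infinitely many elements are small, each small `x` lies below another small element:
all but finitely many small elements are not below `x`, hence above it by totality. Iterating a
choice of such a successor gives an ascending sequence; the descending case is the same argument
for the reversed order. -/

variable {α : Type*}

lemma exists_chain_of_forall_exists_rel (r : α → α → Prop) {S : Set α} (hS : S.Nonempty)
    (hstep : ∀ x ∈ S, ∃ y ∈ S, r x y) : ∃ a : ℕ → α, ∀ n, r (a n) (a (n + 1)) := by
  choose! next hnext_mem hnext_rel using hstep
  obtain ⟨x₀, hx₀⟩ := hS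
  refine ⟨fun n => next^[n] x₀, fun n => ?_⟩
  simpa only [Function.iterate_succ_apply'] using
    hnext_rel _ (Set.MapsTo.iterate hnext_mem n hx₀)

lemma exists_ascending_of_infinite_setOf_finite_pred (r : α → α → Prop)
    (htot : ∀ x y, x ≠ y → r x y ∨ r y x) (h : {x | {y | r y x}.Finite}.Infinite) :
    ∃ a : ℕ → α, ∀ n, r (a n) (a (n + 1)) := by
  refine exists_chain_of_forall_exists_rel r h.nonempty fun x hx => ?_
  obtain ⟨y, hy, hy_not⟩ := (h.sdiff (hx.union (Set.finite_singleton x))).nonempty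
  refine ⟨y, hy, (htot x y fun hxy => hy_not (Or.inr hxy.symm)).resolve_right ?_⟩
  exact fun hyx => hy_not (Or.inl hyx)

lemma infinite_setOf_finite_pred_or_succ [Infinite α] (r : α → α → Prop)
    (hstable : ∀ x, {y | r y x}.Finite ∨ {y | r x y}.Finite) :
    {x | {y | r y x}.Finite}.Infinite ∨ {x | {y | r x y}.Finite}.Infinite := by
  rw [← Set.infinite_union]
  convert Set.infinite_univ (α := α)
  exact Set.eq_univ_of_forall hstable

theorem stmt_11_general (r : ℕ → ℕ → Prop)
    (htot : ∀ x y : ℕ, x ≠ y → r x y ∨ r y x)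
    (hstable : ∀ x : ℕ, {y | r y x}.Finite ∨ {y | r x y}.Finite) :
    ({x : ℕ | {y | r y x}.Finite}.Infinite → ∃ a : ℕ → ℕ, ∀ n, r (a n) (a (n + 1))) ∧
    ({x : ℕ | {y | r x y}.Finite}.Infinite → ∃ a : ℕ → ℕ, ∀ n, r (a (n + 1)) (a n)) ∧
    (∃ a : ℕ → ℕ, (∀ n, r (a n) (a (n + 1))) ∨ (∀ n, r (a (n + 1)) (a n))) := by
  have hasc := exists_ascending_of_infinite_setOf_finite_pred r htot
  have hdesc := exists_ascending_of_infinite_setOf_finite_pred (flip r) fun x y hxy =>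
    htot y x hxy.symm
  refine ⟨hasc, hdesc, ?_⟩
  rcases infinite_setOf_finite_pred_or_succ r hstable with hsmall | hlarge
  · obtain ⟨a, ha⟩ := hasc hsmall
    exact ⟨a, Or.inl ha⟩
  · obtain ⟨a, ha⟩ := hdesc hlarge
    exact ⟨a, Or.inr ha⟩

theorem stmt_11 (r : ℕ → ℕ → Prop)
    (hirr : ∀ x, ¬ r x x) (htrans : ∀ x y z, r x y → r y z → r x z)
    (htot : ∀ x y : ℕ, x ≠ y → r x y ∨ r y x)
    (hstable : ∀ x : ℕ, {y | r y x}.Finite ∨ {y | r x y}.Finite) :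
    ({x : ℕ | {y | r y x}.Finite}.Infinite → ∃ a : ℕ → ℕ, ∀ n, r (a n) (a (n + 1))) ∧
    ({x : ℕ | {y | r x y}.Finite}.Infinite → ∃ a : ℕ → ℕ, ∀ n, r (a (n + 1)) (a n)) ∧
    (∃ a : ℕ → ℕ, (∀ n, r (a n) (a (n + 1))) ∨ (∀ n, r (a (n + 1)) (a n))) :=
  stmt_11_general r htot hstable
end

section
/- Let L be a stable linear order on ℕ with U⁰ the small elements and U¹ the large elements. Suppose (σ⁰, σ¹) satisfies σ⁰ ⊆ U⁰, σ¹ ⊆ U¹, σ⁰ is <_L-ascending, σ¹ is <_L-descending, and (τ⁰, τ¹) is a split pair extending it (σ⁰ is a prefix of τ⁰, σ¹ is a prefix of τ¹). Then either (τ⁰, σ¹) or (σ⁰, τ¹) again satisfies the condition property: i.e., τ⁰ ⊆ U⁰ or τ¹ ⊆ U¹. -/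
/-!
Apply stability to the last element `a` of `τ⁰`. If `a` has finitely many predecessors, so does
every element of `τ⁰`, since `τ⁰` ascends to `a`. Otherwise `a` has finitely many successors,
and so does every element of `τ¹`, since `τ¹` descends to its last element, which lies above `a`.
-/

section
variable {α : Type*} {r : α → α → Prop}

lemma finite_setOf_rel_left_of_rel (htrans : ∀ x y z, r x y → r y z → r x z) {x y : α}
    (hxy : r x y) (hy : {z | r z y}.Finite) : {z | r z x}.Finite :=
  hy.subset fun _ hzx => htrans _ _ _ hzx hxy

lemma finite_setOf_rel_right_of_rel (htrans : ∀ x y z, r x y → r y z → r x z) {x y : α}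
    (hxy : r x y) (hx : {z | r x z}.Finite) : {z | r y z}.Finite :=
  hx.subset fun _ hyz => htrans _ _ _ hxy hyz

end

theorem stmt_13_general (r : ℕ → ℕ → Prop)
    (htrans : ∀ x y z, r x y → r y z → r x z)
    (hstable : ∀ x : ℕ, {y | r y x}.Finite ∨ {y | r x y}.Finite)
    (τ0 τ1 : List ℕ)
    (hτ0asc : τ0.Chain' r) (hτ1desc : τ1.Chain' (fun a b => r b a))
    (hn0 : τ0 ≠ []) (hn1 : τ1 ≠ [])
    (hsplit : r (τ0.getLast hn0) (τ1.getLast hn1)) :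
    (∀ x ∈ τ0, {y | r y x}.Finite) ∨ (∀ x ∈ τ1, {y | r x y}.Finite) := by
  rcases hstable (τ0.getLast hn0) with hfin | hfin
  · exact Or.inl <| hτ0asc.backwards_induction _ _
      (fun _ _ hxy => finite_setOf_rel_left_of_rel htrans hxy) fun _ => hfin
  · exact Or.inr <| hτ1desc.backwards_induction _ _
      (fun _ _ hyx => finite_setOf_rel_right_of_rel htrans hyx)
      fun _ => finite_setOf_rel_right_of_rel htrans hsplit hfin

theorem stmt_13 (r : ℕ → ℕ → Prop)
    (hirr : ∀ x, ¬ r x x) (htrans : ∀ x y z, r x y → r y z → r x z)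
    (htot : ∀ x y : ℕ, x ≠ y → r x y ∨ r y x)
    (hstable : ∀ x : ℕ, {y | r y x}.Finite ∨ {y | r x y}.Finite)
    (σ0 σ1 τ0 τ1 : List ℕ)
    (hσ0asc : σ0.Chain' r) (hσ1desc : σ1.Chain' (fun a b => r b a))
    (hσ0U : ∀ x ∈ σ0, {y | r y x}.Finite) (hσ1U : ∀ x ∈ σ1, {y | r x y}.Finite)
    (hpre0 : σ0 <+: τ0) (hpre1 : σ1 <+: τ1)
    (hτ0asc : τ0.Chain' r) (hτ1desc : τ1.Chain' (fun a b => r b a))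
    (hn0 : τ0 ≠ []) (hn1 : τ1 ≠ [])
    (hsplit : r (τ0.getLast hn0) (τ1.getLast hn1)) :
    (∀ x ∈ τ0, {y | r y x}.Finite) ∨ (∀ x ∈ τ1, {y | r x y}.Finite) :=
  stmt_13_general r htrans hstable τ0 τ1 hτ0asc hτ1desc hn0 hn1 hsplit
end

section
/- Let f : [ℕ]² → 2 be a coloring with no f-homogeneous set of size k for color 1, for some k. Suppose X = {x₀ < x₁ < ...} is infinite and the induced coloring h(a,b) = f(x_a, x_b) is transitive for at least one color c ∈ {0,1}. Then there exist ℓ ∈ ℕ and a coloring g : ℕ → ℓ such that each g⁻¹(i) is h-homogeneous for color 0, and consequently (by the infinite pigeonhole principle) there is an infinite f-homogeneous set for color 0. -/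
/-!
Write `h a b = f (x a) (x b)` and `<_c` for the relation `a < b ∧ h a b = c`, a strict order when
`h` is transitive in color `c`. A `1`-homogeneous set is a chain of `<_1` and an antichain of
`<_0`, so in both orders these have fewer than `k` elements. If `c = 0`, Dilworth's theorem
(Galvin's induction for finite sets, then de Bruijn–Erdős compactness) covers `ℕ` by `k - 1`
chains of `<_0`; if `c = 1`, Mirsky's theorem (color by height) covers it by `k - 1` antichains of
`<_1`. Either way the classes are `0`-homogeneous, and by pigeonhole one of them is infinite.
-/

open Finset

variable {α : Type*} {r : α → α → Prop}

theorem Finset.exists_forall_not_rel [IsStrictOrder α r] {s : Finset α} (hs : s.Nonempty) :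
    ∃ a ∈ s, ∀ b ∈ s, ¬ r a b := by
  obtain ⟨⟨a, has⟩, -, ha⟩ := (s.finite_toSet.wellFoundedOn (r := Function.swap r)).has_min
    Set.univ ⟨⟨_, hs.choose_spec⟩, trivial⟩
  exact ⟨a, has, fun b hb => ha ⟨b, hb⟩ trivial⟩

variable (r) in
def IsChainCover (s : Finset α) (d : ℕ) (c : α → ℕ) : Prop :=
  (∀ a ∈ s, c a < d) ∧ ∀ a ∈ s, ∀ b ∈ s, a ≠ b → c a = c b → r a b ∨ r b a

variable (r) in
def IsAntichainOfCard (s : Finset α) (d : ℕ) (A : Finset α) : Prop :=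
  A ⊆ s ∧ IsAntichain r (A : Set α) ∧ #A = d

variable (r) in
/-- The top of chain `i` in Galvin's proof: the highest element of the chain lying on an antichain
of size `d`. -/
def IsChainTop (s : Finset α) (d : ℕ) (c : α → ℕ) (i : ℕ) (x : α) : Prop :=
  x ∈ s ∧ c x = i ∧ (∃ B, IsAntichainOfCard r s d B ∧ x ∈ B) ∧
    ∀ B, IsAntichainOfCard r s d B → ∃ b ∈ B, c b = i ∧ (b = x ∨ r b x)

namespace IsChainCover

variable {s t K A : Finset α} {d d' : ℕ} {c : α → ℕ}

theorem mono (hc : IsChainCover r s d c) (hd : d ≤ d') : IsChainCover r s d' c :=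
  ⟨fun a ha => (hc.1 a ha).trans_le hd, hc.2⟩

open Classical in
theorem union_chain (hc : IsChainCover r t d c) (hK : IsChain r (K : Set α)) :
    IsChainCover r (K ∪ t) (d + 1) (fun a => if a ∈ K then d else c a) := by
  have ht {a} (ha : a ∈ K ∪ t) (haK : a ∉ K) : a ∈ t := (mem_union.1 ha).resolve_left haK
  refine ⟨fun a ha => ?_, fun a ha b hb hab hcab => ?_⟩
  · by_cases haK : a ∈ K
    · simp [haK]
    · simpa [haK] using (hc.1 a (ht ha haK)).trans (lt_add_one d)
  · by_cases haK : a ∈ K <;> by_cases hbK : b ∈ K <;>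
      simp only [haK, hbK, if_true, if_false] at hcab
    · exact hK haK hbK hab
    · exact absurd hcab (hc.1 b (ht hb hbK)).ne'
    · exact absurd hcab (hc.1 a (ht ha haK)).ne
    · exact hc.2 a (ht ha haK) b (ht hb hbK) hab hcab

theorem injOn (hc : IsChainCover r s d c) (hA : A ⊆ s) (hA' : IsAntichain r (A : Set α)) :
    Set.InjOn c A := fun a ha b hb hcab => by
  by_contra hab
  rcases hc.2 a (hA ha) b (hA hb) hab hcab with h | h
  · exact hA' ha hb hab h
  · exact hA' hb ha (Ne.symm hab) h

theorem card_le (hc : IsChainCover r s d c) (hA : A ⊆ s) (hA' : IsAntichain r (A : Set α)) :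
    #A ≤ d := by
  simpa using card_le_card_of_injOn c (fun a ha => mem_range.2 (hc.1 a (hA ha))) (hc.injOn hA hA')

theorem exists_mem_of_card_eq (hc : IsChainCover r s d c) (hA : IsAntichainOfCard r s d A)
    {i : ℕ} (hi : i < d) : ∃ a ∈ A, c a = i := by
  obtain ⟨hAs, hA', rfl⟩ := hA
  have : A.image c = range #A := eq_of_subset_of_card_le
    (fun j hj => by obtain ⟨a, ha, rfl⟩ := mem_image.1 hj; exact mem_range.2 (hc.1 a (hAs ha)))
    (by rw [card_range, card_image_of_injOn (hc.injOn hAs hA')])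
  obtain ⟨a, ha, rfl⟩ := mem_image.1 (this ▸ mem_range.2 hi : i ∈ A.image c)
  exact ⟨a, ha, rfl⟩

theorem exists_isChainTop [IsStrictOrder α r] (hc : IsChainCover r s d c)
    (hA : IsAntichainOfCard r s d A) {i : ℕ} (hi : i < d) : ∃ x, IsChainTop r s d c i x := by
  classical
  let T := s.filter fun x => c x = i ∧ ∃ B, IsAntichainOfCard r s d B ∧ x ∈ B
  obtain ⟨a, ha, hai⟩ := hc.exists_mem_of_card_eq hA hi
  obtain ⟨x, hxT, hx⟩ := exists_forall_not_rel (r := r) (s := T)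
    ⟨a, mem_filter.2 ⟨hA.1 ha, hai, A, hA, ha⟩⟩
  obtain ⟨hxs, hxi, hxB⟩ := mem_filter.1 hxT
  refine ⟨x, hxs, hxi, hxB, fun B hB => ?_⟩
  obtain ⟨b, hbB, hbi⟩ := hc.exists_mem_of_card_eq hB hi
  refine ⟨b, hbB, hbi, or_iff_not_imp_left.2 fun hbx => ?_⟩
  have hbT : b ∈ T := mem_filter.2 ⟨hB.1 hbB, hbi, B, hB, hbB⟩
  exact (hc.2 b (hB.1 hbB) x hxs hbx (hbi.trans hxi.symm)).resolve_right (hx b hbT)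

end IsChainCover

namespace IsChainTop

variable [IsTrans α r] {s : Finset α} {a x y : α} {d i j : ℕ} {c : α → ℕ}

theorem not_rel (hx : IsChainTop r s d c i x) (hy : IsChainTop r s d c j y) (hij : i ≠ j) :
    ¬ r x y := by
  intro hxy
  obtain ⟨B, hB, hyB⟩ := hy.2.2.1
  obtain ⟨b, hbB, hbi, hb⟩ := hx.2.2.2 B hB
  refine hB.2.1 hbB hyB (fun hby => hij ?_) (hb.elim (· ▸ hxy) (_root_.trans · hxy))
  rw [← hbi, hby, hy.2.1]

variable [DecidableEq α]

/-- `K` is `a` together with the part of chain `i` up to its top. -/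
theorem exists_chain (hc : IsChainCover r (s.erase a) d c) (hx : IsChainTop r (s.erase a) d c i x)
    (hxa : r x a) (has : a ∈ s) : ∃ K ⊆ s, a ∈ K ∧ IsChain r (K : Set α) ∧
      ∀ B ⊆ s \ K, IsAntichain r (B : Set α) → #B < d := by
  classical
  let K := insert a ((s.erase a).filter fun b => c b = i ∧ (b = x ∨ r b x))
  refine ⟨K, insert_subset has ((filter_subset _ _).trans (erase_subset a s)),
    mem_insert_self a _, ?_, fun B hB hB' => ?_⟩
  · rw [coe_insert]
    refine IsChain.insert (fun b hb b' hb' hbb' => ?_) fun b hb _ => Or.inr ?_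
    · obtain ⟨hbt, hbi, -⟩ := mem_filter.1 hb
      obtain ⟨hbt', hbi', -⟩ := mem_filter.1 hb'
      exact hc.2 b hbt b' hbt' hbb' (hbi.trans hbi'.symm)
    · obtain ⟨-, -, rfl | hb⟩ := mem_filter.1 hb
      exacts [hxa, _root_.trans hb hxa]
  have hBt : B ⊆ s.erase a := hB.trans fun b hb => mem_erase.2
    ⟨fun h => (mem_sdiff.1 hb).2 (h ▸ mem_insert_self a _), (mem_sdiff.1 hb).1⟩
  refine lt_of_le_of_ne (hc.card_le hBt hB') fun hBd => ?_
  obtain ⟨b, hbB, hb⟩ := hx.2.2.2 B ⟨hBt, hB', hBd⟩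
  exact (mem_sdiff.1 (hB hbB)).2 (mem_insert_of_mem (mem_filter.2 ⟨hBt hbB, hb⟩))

theorem isAntichainOfCard_insert_image {top : ℕ → α}
    (htop : ∀ i < d, IsChainTop r (s.erase a) d c i (top i)) (has : a ∈ s)
    (ha : ∀ b ∈ s, ¬ r a b) (hlow : ∀ i < d, ¬ r (top i) a) :
    IsAntichainOfCard r s (d + 1) (insert a ((range d).image top)) := by
  have htop_mem {i} (hi : i ∈ range d) : top i ∈ s.erase a := (htop i (mem_range.1 hi)).1
  refine ⟨insert_subset has fun b hb => ?_, ?_, ?_⟩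
  · obtain ⟨i, hi, rfl⟩ := mem_image.1 hb
    exact erase_subset a s (htop_mem hi)
  · rw [coe_insert, coe_image]
    refine IsAntichain.insert ?_ ?_ ?_
    · rintro _ ⟨i, hi, rfl⟩ _ ⟨j, hj, rfl⟩ hij
      exact (htop i (mem_range.1 hi)).not_rel (htop j (mem_range.1 hj)) fun h => hij (h ▸ rfl)
    · rintro _ ⟨i, hi, rfl⟩ -
      exact hlow i (mem_range.1 hi)
    · rintro _ ⟨i, hi, rfl⟩ -
      exact ha _ (erase_subset a s (htop_mem hi))
  · rw [card_insert_of_notMem, card_image_of_injOn, card_range]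
    · intro i hi j hj hij
      rw [← (htop i (mem_range.1 hi)).2.1, hij, (htop j (mem_range.1 hj)).2.1]
    · intro h
      obtain ⟨i, hi, hia⟩ := mem_image.1 h
      exact (mem_erase.1 (htop_mem hi)).1 hia

end IsChainTop

/-- Remove a maximal element `a` and cover the rest minimally: either some chain top lies below
`a`, and a chain through `a` can be split off, or the tops and `a` form a larger antichain. -/
theorem exists_antichainOfCard_and_chainCover [IsStrictOrder α r] (s : Finset α) :
    ∃ d, (∃ A, IsAntichainOfCard r s d A) ∧ ∃ c, IsChainCover r s d c := by
  classical
  induction s using Finset.strongInduction with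
  | H s ih =>
  rcases s.eq_empty_or_nonempty with rfl | hs
  · exact ⟨0, ⟨∅, by simp [IsAntichainOfCard]⟩, fun _ => 0, by simp [IsChainCover]⟩
  obtain ⟨a, has, ha⟩ := exists_forall_not_rel (r := r) hs
  obtain ⟨d, ⟨A, hA⟩, c, hc⟩ := ih (s.erase a) (erase_ssubset has)
  have : Nonempty α := ⟨a⟩
  choose! top htop using fun i (hi : i < d) => hc.exists_isChainTop hA hi
  by_cases hlow : ∃ i < d, r (top i) a
  · obtain ⟨i, hi, hia⟩ := hlow
    obtain ⟨K, hKs, haK, hK, hKB⟩ := (htop i hi).exists_chain hc hia has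
    obtain ⟨d', ⟨B, hB⟩, c', hc'⟩ := ih (s \ K) (sdiff_ssubset hKs ⟨a, haK⟩)
    have := (hc'.union_chain hK).mono (hB.2.2 ▸ hKB B hB.1 hB.2.1)
    rw [union_sdiff_of_subset hKs] at this
    exact ⟨d, ⟨A, hA.1.trans (erase_subset a s), hA.2⟩, _, this⟩
  · push Not at hlow
    have := hc.union_chain (K := {a}) (by simp)
    rw [singleton_union, insert_erase has] at this
    exact ⟨d + 1, ⟨_, IsChainTop.isAntichainOfCard_insert_image htop has ha hlow⟩, _, this⟩

theorem exists_chain_partition_of_card_le [IsStrictOrder α r] {w : ℕ}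
    (hw : ∀ A : Finset α, IsAntichain r (A : Set α) → #A ≤ w) :
    ∃ c : α → Fin w, ∀ i, IsChain r {a | c a = i} := by
  classical
  choose d hd c hc using exists_antichainOfCard_and_chainCover (r := r)
  have hdw (s : Finset α) : d s ≤ w := by
    obtain ⟨A, -, hA, hAd⟩ := hd s
    exact hAd ▸ hw A hA
  obtain ⟨χ, hχ⟩ := Finset.rado_selection_subtype (β := fun _ => Fin w) fun s a =>
    ⟨c s a, (hc s).1 a a.2 |>.trans_le (hdw s)⟩
  refine ⟨χ, ?_⟩
  rintro i a (rfl : χ a = i) b (hb : χ b = χ a) hab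
  obtain ⟨t, hst, hχt⟩ := hχ {a, b}
  have ha := hχt ⟨a, by simp⟩
  have hb' := hχt ⟨b, by simp⟩
  refine (hc t).2 a (hst (by simp)) b (hst (by simp)) hab ?_
  simp only [Fin.ext_iff] at ha hb'
  simpa [ha, hb'] using congrArg Fin.val hb.symm

variable (r) in
def chainCardsBelow (a : α) : Set ℕ :=
  {n | ∃ t : Finset α, IsChain r (t : Set α) ∧ (∀ b ∈ t, r b a) ∧ #t = n}

variable (r) in
noncomputable def heightBelow (a : α) : ℕ :=
  sSup (chainCardsBelow r a)

section Mirsky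

variable [IsStrictOrder α r] {w : ℕ}

theorem card_add_one_le_of_forall_rel (hw : ∀ t : Finset α, IsChain r (t : Set α) → #t ≤ w)
    {t : Finset α} {a : α} (ht : IsChain r (t : Set α)) (hta : ∀ b ∈ t, r b a) :
    #t + 1 ≤ w := by
  classical
  have ha : a ∉ t := fun h => irrefl a (hta a h)
  simpa [ha] using hw (insert a t) (by
    rw [coe_insert]; exact ht.insert fun b hb _ => Or.inr (hta b hb))

theorem bddAbove_chainCardsBelow (hw : ∀ t : Finset α, IsChain r (t : Set α) → #t ≤ w)
    (a : α) : BddAbove (chainCardsBelow r a) := by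
  refine ⟨w, ?_⟩
  rintro _ ⟨t, ht, hta, rfl⟩
  exact (Nat.le_succ _).trans (card_add_one_le_of_forall_rel hw ht hta)

theorem heightBelow_mem (hw : ∀ t : Finset α, IsChain r (t : Set α) → #t ≤ w) (a : α) :
    heightBelow r a ∈ chainCardsBelow r a :=
  Nat.sSup_mem ⟨0, ∅, by simp⟩ (bddAbove_chainCardsBelow hw a)

theorem heightBelow_lt (hw : ∀ t : Finset α, IsChain r (t : Set α) → #t ≤ w) (a : α) :
    heightBelow r a < w := by
  obtain ⟨t, ht, hta, hcard⟩ := heightBelow_mem hw a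
  exact hcard ▸ card_add_one_le_of_forall_rel hw ht hta

theorem heightBelow_lt_of_rel (hw : ∀ t : Finset α, IsChain r (t : Set α) → #t ≤ w) {a b : α}
    (hab : r a b) : heightBelow r a < heightBelow r b := by
  classical
  obtain ⟨t, ht, hta, hcard⟩ := heightBelow_mem hw a
  have ha : a ∉ t := fun h => irrefl a (hta a h)
  refine hcard ▸ le_csSup (bddAbove_chainCardsBelow hw b)
    ⟨insert a t, ?_, ?_, card_insert_of_notMem ha⟩
  · rw [coe_insert]; exact ht.insert fun c hc _ => Or.inr (hta c hc)
  · simpa using ⟨hab, fun c hc => _root_.trans (hta c hc) hab⟩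

theorem exists_antichain_partition_of_card_le
    (hw : ∀ t : Finset α, IsChain r (t : Set α) → #t ≤ w) :
    ∃ c : α → Fin w, ∀ i, IsAntichain r {a | c a = i} := by
  refine ⟨fun a => ⟨heightBelow r a, heightBelow_lt hw a⟩, fun i a ha b hb _ hab => ?_⟩
  have := heightBelow_lt_of_rel hw hab
  simp only [Set.mem_ofPred_eq, Fin.ext_iff] at ha hb
  omega

end Mirsky

def colorRel (h : ℕ → ℕ → Fin 2) (c : Fin 2) (a b : ℕ) : Prop :=
  a < b ∧ h a b = c

section ColorRel

variable {h : ℕ → ℕ → Fin 2} {c : Fin 2} {S : Set ℕ}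

theorem isStrictOrder_colorRel
    (htrans : ∀ a b d, a < b → b < d → h a b = c → h b d = c → h a d = c) :
    IsStrictOrder ℕ (colorRel h c) where
  irrefl a hlt := lt_irrefl a hlt.1
  trans a b d hab hbd := ⟨hab.1.trans hbd.1, htrans a b d hab.1 hbd.1 hab.2 hbd.2⟩

theorem homog_of_isChain_colorRel (hS : IsChain (colorRel h c) S) : Homog h c S :=
  fun _ ha _ hb hab => ((hS ha hb hab.ne).resolve_right fun hba => hab.not_gt hba.1).2

theorem homog_of_isAntichain_colorRel {d : Fin 2} (hcd : c ≠ d)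
    (hS : IsAntichain (colorRel h c) S) : Homog h d S := fun a ha b hb hab => by
  have : h a b ≠ c := fun hc => hS ha hb hab.ne ⟨hab, hc⟩
  omega

end ColorRel

theorem exists_homog_partition {h : ℕ → ℕ → Fin 2} {k : ℕ}
    (hk : ∀ s : Finset ℕ, Homog h 1 s → #s < k) (c : Fin 2)
    (htrans : ∀ a b d, a < b → b < d → h a b = c → h b d = c → h a d = c) :
    ∃ ℓ, ∃ g : ℕ → Fin ℓ, ∀ i, Homog h 0 {a | g a = i} := by
  have hw (s : Finset ℕ) (hs : Homog h 1 s) : #s ≤ k - 1 := Nat.le_sub_one_of_lt (hk s hs)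
  have := isStrictOrder_colorRel htrans
  obtain rfl | rfl : c = 0 ∨ c = 1 := by omega
  · obtain ⟨g, hg⟩ := exists_chain_partition_of_card_le fun A hA =>
      hw A (homog_of_isAntichain_colorRel zero_ne_one hA)
    exact ⟨k - 1, g, fun i => homog_of_isChain_colorRel (hg i)⟩
  · obtain ⟨g, hg⟩ := exists_antichain_partition_of_card_le fun t ht =>
      hw t (homog_of_isChain_colorRel ht)
    exact ⟨k - 1, g, fun i => homog_of_isAntichain_colorRel one_ne_zero (hg i)⟩

theorem homog_image_iff {f : ℕ → ℕ → Fin 2} {x : ℕ → ℕ} (hx : StrictMono x) {c : Fin 2}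
    {S : Set ℕ} : Homog f c (x '' S) ↔ Homog (fun a b => f (x a) (x b)) c S := by
  refine ⟨fun hS a ha b hb hab => hS _ ⟨a, ha, rfl⟩ _ ⟨b, hb, rfl⟩ (hx hab), ?_⟩
  rintro hS _ ⟨a, ha, rfl⟩ _ ⟨b, hb, rfl⟩ hab
  exact hS a ha b hb (hx.lt_iff_lt.1 hab)

theorem card_lt_of_homog {f : ℕ → ℕ → Fin 2} {k : ℕ}
    (hk : ¬ ∃ S : Finset ℕ, S.card = k ∧ Homog f 1 ↑S) {x : ℕ → ℕ} (hx : StrictMono x)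
    (s : Finset ℕ) (hs : Homog (fun a b => f (x a) (x b)) 1 s) : #s < k := by
  by_contra! hks
  obtain ⟨t, hts, rfl⟩ := exists_subset_card_eq hks
  refine hk ⟨t.image x, card_image_of_injective t hx.injective, ?_⟩
  rw [coe_image, homog_image_iff hx]
  exact fun a ha b hb => hs a (hts ha) b (hts hb)

theorem stmt_18 (f : ℕ → ℕ → Fin 2) (k : ℕ)
    (hk : ¬ ∃ S : Finset ℕ, S.card = k ∧ Homog f 1 ↑S)
    (x : ℕ → ℕ) (hx : StrictMono x)
    (htrans : ∃ c : Fin 2, ∀ a b d : ℕ, a < b → b < d →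
      f (x a) (x b) = c → f (x b) (x d) = c → f (x a) (x d) = c) :
    (∃ ℓ : ℕ, ∃ g : ℕ → ℕ, (∀ a, g a < ℓ) ∧
      ∀ i : ℕ, ∀ a b : ℕ, g a = i → g b = i → a < b → f (x a) (x b) = 0) ∧
    ∃ H : Set ℕ, H.Infinite ∧ Homog f 0 H := by
  obtain ⟨c, htrans⟩ := htrans
  obtain ⟨ℓ, g, hg⟩ := exists_homog_partition (card_lt_of_homog hk hx) c htrans
  obtain ⟨i, hi⟩ := Finite.exists_infinite_fiber g
  refine ⟨⟨ℓ, fun a => g a, fun a => (g a).isLt, ?_⟩, x '' (g ⁻¹' {i}),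
    (Set.infinite_coe_iff.1 hi).image hx.injective.injOn, (homog_image_iff hx).2 (hg i)⟩
  rintro _ a b rfl hb hab
  exact hg (g a) a rfl b (Fin.ext hb) hab
end
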